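/- arXiv:2302.10628 — 2 statements merged into one kernel-verified Lean document; each statement's English description precedes it below -/
import Mathlib

section
/- Let q_1, q_2, q_3 ∈ ℝ³ be defined by q_1 = (p_{1,2} + p_{1,3})/2, q_2 = (√6 − 2)p_{1,3} + ((3 − √6)/2)p_{2,3} + ((3 − √6)/2)p_4, q_3 = (√6 − 2)p_{1,2} + ((3 − √6)/2)p_{2,3} + ((3 − √6)/2)p_4, where p_{i,j} = (p_i + p_j)/2, p_1, p_2, p_3 are the vertices of an equilateral triangle of side length 1 in the plane z = 0 centered at the origin, and p_4 is the apex of the regular tetrahedron on the middle triangle of the subdivision (the unique point above the origin with ‖p_4 − p_{i,j}‖ appropriate). Then q_1, q_2, q_3 form an equilateral triangle of side length (√6 − 2)/2. -/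
open Real

noncomputable def vec3 (a b c : ℝ) : EuclideanSpace ℝ (Fin 3) :=
  (EuclideanSpace.equiv (Fin 3) ℝ).symm ![a, b, c]

/-!
In coordinates `q₁ = (√3/12, 0, 0)` and `q₂, q₃ = ((6√2 − 5√3)/12, ∓(√6 − 2)/4, (√6 − 2)/4)`,
so `q₂, q₃` are mirror images in the plane `y = 0` through `q₁`, and all three squared
distances reduce to `(5 − 2√6)/2 = ((√6 − 2)/2)²` once `√3 · √2 = √6` is used.
-/

lemma vec3_smul (r a b c : ℝ) : r • vec3 a b c = vec3 (r * a) (r * b) (r * c) := by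
  ext i; fin_cases i <;> rfl

lemma vec3_add (a b c d e f : ℝ) :
    vec3 a b c + vec3 d e f = vec3 (a + d) (b + e) (c + f) := by
  ext i; fin_cases i <;> rfl

lemma vec3_sub (a b c d e f : ℝ) :
    vec3 a b c - vec3 d e f = vec3 (a - d) (b - e) (c - f) := by
  ext i; fin_cases i <;> rfl

lemma norm_vec3 (a b c : ℝ) : ‖vec3 a b c‖ = √(a ^ 2 + b ^ 2 + c ^ 2) := by
  simp [EuclideanSpace.norm_eq, vec3, Fin.sum_univ_three]

lemma norm_vec3_eq_of_sq_add_sq {a b c L : ℝ} (hL : 0 ≤ L) (h : a ^ 2 + b ^ 2 + c ^ 2 = L ^ 2) :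
    ‖vec3 a b c‖ = L := by
  rw [norm_vec3, h, sqrt_sq hL]

lemma cos_two_pi_div_three : cos (2 * π / 3) = -(1 / 2) := by
  rw [show 2 * π / 3 = π - π / 3 by ring, cos_pi_sub, cos_pi_div_three]

lemma sin_two_pi_div_three : sin (2 * π / 3) = √3 / 2 := by
  rw [show 2 * π / 3 = π - π / 3 by ring, sin_pi_sub, sin_pi_div_three]

lemma cos_four_pi_div_three : cos (4 * π / 3) = -(1 / 2) := by
  rw [show 4 * π / 3 = π / 3 + π by ring, cos_add_pi, cos_pi_div_three]

lemma sin_four_pi_div_three : sin (4 * π / 3) = -(√3 / 2) := by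
  rw [show 4 * π / 3 = π / 3 + π by ring, sin_add_pi, sin_pi_div_three]

lemma smul_vec3_cos_sin_zero : (√3 / 3) • vec3 (cos 0) (sin 0) 0 = vec3 (√3 / 3) 0 0 := by
  simp [vec3_smul]

lemma smul_vec3_cos_sin_two_pi_div_three :
    (√3 / 3) • vec3 (cos (2 * π / 3)) (sin (2 * π / 3)) 0 = vec3 (-(√3 / 6)) (1 / 2) 0 := by
  rw [cos_two_pi_div_three, sin_two_pi_div_three, vec3_smul]
  congr 1
  · ring
  · linear_combination sq_sqrt (show (0 : ℝ) ≤ 3 by norm_num) / 6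
  · ring

lemma smul_vec3_cos_sin_four_pi_div_three :
    (√3 / 3) • vec3 (cos (4 * π / 3)) (sin (4 * π / 3)) 0 = vec3 (-(√3 / 6)) (-(1 / 2)) 0 := by
  rw [cos_four_pi_div_three, sin_four_pi_div_three, vec3_smul]
  congr 1
  · ring
  · linear_combination -sq_sqrt (show (0 : ℝ) ≤ 3 by norm_num) / 6
  · ring

lemma sqrt_three_mul_sqrt_two : √3 * √2 = √6 := by
  rw [← sqrt_mul (by norm_num)]; norm_num

lemma sqrt_three_mul_sqrt_six : √3 * √6 = 3 * √2 := by
  rw [← sqrt_three_mul_sqrt_two, ← mul_assoc, mul_self_sqrt (by norm_num)]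

lemma two_le_sqrt_six : 2 ≤ √6 :=
  le_sqrt_of_sq_le (by norm_num)

lemma norm_sub_mirror_constraint_point {y : ℝ} (hy : y ^ 2 = ((√6 - 2) / 4) ^ 2) :
    ‖vec3 (√3 / 12) 0 0 - vec3 ((6 * √2 - 5 * √3) / 12) y ((√6 - 2) / 4)‖ = (√6 - 2) / 2 := by
  have h2 : √2 ^ 2 = 2 := sq_sqrt (by norm_num)
  have h3 : √3 ^ 2 = 3 := sq_sqrt (by norm_num)
  have h6 : √6 ^ 2 = 6 := sq_sqrt (by norm_num)
  rw [vec3_sub]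
  refine norm_vec3_eq_of_sq_add_sq (by linarith [two_le_sqrt_six]) ?_
  linear_combination (h3 + h2) / 4 - h6 / 8 - sqrt_three_mul_sqrt_two / 2 + hy

/-- The constraint points `q₁, q₂, q₃` of Case 3a form an equilateral triangle
of side length `(√6 − 2)/2`. -/
theorem case3a_constraints_equilateral :
    let p₁ : EuclideanSpace ℝ (Fin 3) :=
      (Real.sqrt 3 / 3) • vec3 (Real.cos 0) (Real.sin 0) 0
    let p₂ : EuclideanSpace ℝ (Fin 3) :=
      (Real.sqrt 3 / 3) • vec3 (Real.cos (2 * π / 3)) (Real.sin (2 * π / 3)) 0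
    let p₃ : EuclideanSpace ℝ (Fin 3) :=
      (Real.sqrt 3 / 3) • vec3 (Real.cos (4 * π / 3)) (Real.sin (4 * π / 3)) 0
    let p₄ : EuclideanSpace ℝ (Fin 3) := vec3 0 0 (Real.sqrt 6 / 6)
    let p₁₂ : EuclideanSpace ℝ (Fin 3) := (1 / 2 : ℝ) • (p₁ + p₂)
    let p₁₃ : EuclideanSpace ℝ (Fin 3) := (1 / 2 : ℝ) • (p₁ + p₃)
    let p₂₃ : EuclideanSpace ℝ (Fin 3) := (1 / 2 : ℝ) • (p₂ + p₃)
    let q₁ : EuclideanSpace ℝ (Fin 3) := (1 / 2 : ℝ) • (p₁₂ + p₁₃)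
    let q₂ : EuclideanSpace ℝ (Fin 3) :=
      (Real.sqrt 6 - 2) • p₁₃ + ((3 - Real.sqrt 6) / 2) • p₂₃ +
        ((3 - Real.sqrt 6) / 2) • p₄
    let q₃ : EuclideanSpace ℝ (Fin 3) :=
      (Real.sqrt 6 - 2) • p₁₂ + ((3 - Real.sqrt 6) / 2) • p₂₃ +
        ((3 - Real.sqrt 6) / 2) • p₄
    ‖q₁ - q₂‖ = (Real.sqrt 6 - 2) / 2 ∧ ‖q₂ - q₃‖ = (Real.sqrt 6 - 2) / 2 ∧
      ‖q₁ - q₃‖ = (Real.sqrt 6 - 2) / 2 := by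
  intro p₁ p₂ p₃ p₄ p₁₂ p₁₃ p₂₃ q₁ q₂ q₃
  have hp₁ : p₁ = vec3 (√3 / 3) 0 0 := smul_vec3_cos_sin_zero
  have hp₂ : p₂ = vec3 (-(√3 / 6)) (1 / 2) 0 := smul_vec3_cos_sin_two_pi_div_three
  have hp₃ : p₃ = vec3 (-(√3 / 6)) (-(1 / 2)) 0 := smul_vec3_cos_sin_four_pi_div_three
  have h6 : √6 ^ 2 = 6 := sq_sqrt (by norm_num)
  have hq₁ : q₁ = vec3 (√3 / 12) 0 0 := by
    simp only [q₁, p₁₂, p₁₃, hp₁, hp₂, hp₃, vec3_smul, vec3_add]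
    congr 1 <;> ring
  have hq₂ : q₂ = vec3 ((6 * √2 - 5 * √3) / 12) (-((√6 - 2) / 4)) ((√6 - 2) / 4) := by
    simp only [q₂, p₁₃, p₂₃, p₄, hp₁, hp₂, hp₃, vec3_smul, vec3_add]
    congr 1
    · linear_combination sqrt_three_mul_sqrt_six / 6
    · ring
    · linear_combination -h6 / 12
  have hq₃ : q₃ = vec3 ((6 * √2 - 5 * √3) / 12) ((√6 - 2) / 4) ((√6 - 2) / 4) := by
    simp only [q₃, p₁₂, p₂₃, p₄, hp₁, hp₂, hp₃, vec3_smul, vec3_add]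
    congr 1
    · linear_combination sqrt_three_mul_sqrt_six / 6
    · ring
    · linear_combination -h6 / 12
  refine ⟨?_, ?_, ?_⟩
  · rw [hq₁, hq₂]; exact norm_sub_mirror_constraint_point (by ring)
  · rw [hq₂, hq₃, vec3_sub]
    exact norm_vec3_eq_of_sq_add_sq (by linarith [two_le_sqrt_six]) (by ring)
  · rw [hq₁, hq₃]; exact norm_sub_mirror_constraint_point rfl
end

section
/- Let A be a square in ℝ³ of side length ℓ√2/2 (so with diagonal of length ℓ). Suppose X ⊆ A is a set that intersects both open halves H_L and H_R determined by a fixed diagonal L of A, and X intersects both R₁ \ R₂ and R₂ \ R₁, where R₁ and R₂ are the two closed sub-squares of A of half scale sharing the diagonal L, with R₁ containing the top vertex and R₂ centered at the center of A. Then diam(X) ≥ ℓ(√3 − 1)/16. -/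
private lemma coord_le_dist (x y : EuclideanSpace ℝ (Fin 2)) (i : Fin 2) :
    |x i - y i| ≤ dist x y := by
  rw [EuclideanSpace.dist_eq, ← Real.sqrt_sq_eq_abs]
  apply Real.sqrt_le_sqrt
  have := Finset.single_le_sum (f := fun j => (x j - y j) ^ 2)
    (fun j _ => sq_nonneg _) (Finset.mem_univ i)
  simpa [Real.dist_eq, sq_abs] using this

/-- The square critical-region lemma: in the square `A` of diagonal `ℓ`
(with distinguished diagonal `L` on the vertical axis), a set `X ⊆ A` meeting
both open halves `H_L`, `H_R` and both `R₁ \ R₂` and `R₂ \ R₁` (the half-scale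
sub-squares at the top vertex and the center) has diameter at least
`ℓ(√3 − 1)/16`. -/
theorem square_critical_region (ℓ : ℝ) (hℓ : 0 < ℓ)
    (X : Set (EuclideanSpace ℝ (Fin 2)))
    (A : Set (EuclideanSpace ℝ (Fin 2)))
    (hA : A = {p | |p 0| + |p 1| ≤ ℓ / 2})
    (R₁ R₂ HL HR : Set (EuclideanSpace ℝ (Fin 2)))
    (hR₁ : R₁ = {p | |p 0| + |p 1 - ℓ / 4| ≤ ℓ / 4})
    (hR₂ : R₂ = {p | |p 0| + |p 1| ≤ ℓ / 4})
    (hHL : HL = {p | p 0 < 0}) (hHR : HR = {p | 0 < p 0})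
    (hXA : X ⊆ A)
    (hL : (X ∩ HL).Nonempty) (hR : (X ∩ HR).Nonempty)
    (h₁₂ : (X ∩ (R₁ \ R₂)).Nonempty) (h₂₁ : (X ∩ (R₂ \ R₁)).Nonempty) :
    ℓ * (Real.sqrt 3 - 1) / 16 ≤ Metric.diam X := by
  obtain ⟨p, hpX, hpL⟩ := hL
  obtain ⟨q, hqX, hqR⟩ := hR
  obtain ⟨a, haX, ha⟩ := h₁₂
  obtain ⟨b, hbX, hb⟩ := h₂₁
  rw [hHL] at hpL; rw [hHR] at hqR
  simp only [Set.mem_setOf_eq] at hpL hqR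
  rw [hR₁, hR₂] at ha hb
  have ha1 : |a 0| + |a 1 - ℓ / 4| ≤ ℓ / 4 := ha.1
  have ha2 : ℓ / 4 < |a 0| + |a 1| := lt_of_not_ge ha.2
  have hb1 : |b 0| + |b 1| ≤ ℓ / 4 := hb.1
  have hb2 : ℓ / 4 < |b 0| + |b 1 - ℓ / 4| := lt_of_not_ge hb.2
  -- X is bounded
  have hbdd : Bornology.IsBounded X := by
    apply Bornology.IsBounded.subset (Metric.isBounded_closedBall (x := 0) (r := ℓ / 2))
    intro x hx
    have hx' : |x 0| + |x 1| ≤ ℓ / 2 := by have := hXA hx; rwa [hA] at this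
    simp only [Metric.mem_closedBall, dist_zero_right]
    rw [EuclideanSpace.norm_eq]
    have hsum : ∑ i, ‖x i‖ ^ 2 ≤ (|x 0| + |x 1|) ^ 2 := by
      rw [Fin.sum_univ_two]
      simp only [Real.norm_eq_abs]
      nlinarith [abs_nonneg (x 0), abs_nonneg (x 1)]
    calc Real.sqrt (∑ i, ‖x i‖ ^ 2) ≤ Real.sqrt ((|x 0| + |x 1|) ^ 2) :=
          Real.sqrt_le_sqrt hsum
      _ = |x 0| + |x 1| := Real.sqrt_sq (by positivity)
      _ ≤ ℓ / 2 := hx'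
  set d := Metric.diam X with hd
  have hdist : ∀ x ∈ X, ∀ y ∈ X, dist x y ≤ d := fun x hx y hy =>
    Metric.dist_le_diam_of_mem hbdd hx hy
  -- coordinate bounds
  have hap : a 0 - p 0 ≤ d :=
    le_trans (le_trans (le_abs_self _) (coord_le_dist a p 0)) (hdist a haX p hpX)
  have haq : q 0 - a 0 ≤ d := by
    have := le_trans (le_trans (neg_le_abs _) (coord_le_dist a q 0)) (hdist a haX q hqX)
    linarith
  have hbp : b 0 - p 0 ≤ d :=
    le_trans (le_trans (le_abs_self _) (coord_le_dist b p 0)) (hdist b hbX p hpX)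
  have hbq : q 0 - b 0 ≤ d := by
    have := le_trans (le_trans (neg_le_abs _) (coord_le_dist b q 0)) (hdist b hbX q hqX)
    linarith
  have hab : a 1 - b 1 ≤ d :=
    le_trans (le_trans (le_abs_self _) (coord_le_dist a b 1)) (hdist a haX b hbX)
  have ha0d : |a 0| < d := abs_lt.mpr ⟨by linarith, by linarith⟩
  have hb0d : |b 0| < d := abs_lt.mpr ⟨by linarith, by linarith⟩
  -- a 1 is large
  have ha0le : |a 0| ≤ a 1 := by
    have := neg_le_abs (a 1 - ℓ / 4); linarith
  have ha1nn : 0 ≤ a 1 := le_trans (abs_nonneg _) ha0le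
  have ha2' : ℓ / 4 < |a 0| + a 1 := by rwa [abs_of_nonneg ha1nn] at ha2
  -- b 1 is small
  have hb1le : b 1 ≤ ℓ / 4 := le_trans (le_abs_self _) (by linarith [abs_nonneg (b 0)])
  have hb2' : b 1 < |b 0| := by
    rw [abs_of_nonpos (by linarith : b 1 - ℓ / 4 ≤ 0)] at hb2; linarith
  -- conclude: 3 d > ℓ/4, and √3 ≤ 2
  have h3 : Real.sqrt 3 ≤ 2 := by
    rw [show (2 : ℝ) = Real.sqrt 4 by
      rw [show (4 : ℝ) = 2 ^ 2 by norm_num, Real.sqrt_sq (by norm_num)]]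
    exact Real.sqrt_le_sqrt (by norm_num)
  nlinarith [hℓ.le]
end
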